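/- If a finite simple graph G is symmetric — i.e., its vertex set can be partitioned into three sets (S, A, B) such that S is an independent set, there is no edge between A and B, and there exists an isomorphism between the induced subgraphs on S ∪ A and S ∪ B which fixes every vertex of S — then G is positive: t(G, W) ≥ 0 for every kernel W. -/

import Mathlib

open MeasureTheory

noncomputable section

/-- The unit interval `[0,1]` as a measure space. -/
abbrev UI : Type := Set.Icc (0:ℝ) 1

/-- A kernel is a symmetric bounded measurable function `[0,1]² → ℝ`. -/
def IsKernel (W : UI → UI → ℝ) : Prop :=
  Measurable (Function.uncurry W) ∧ (∀ x y, W x y = W y x) ∧ ∃ C : ℝ, ∀ x y, |W x y| ≤ C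

open scoped Classical in
/-- The homomorphism density `t(G,W) = ∫_{[0,1]^V} ∏_{(a,b)∈E} W(p(a),p(b)) dp`. -/
noncomputable def homDensity {V : Type} [Fintype V] (G : SimpleGraph V) (W : UI → UI → ℝ) : ℝ :=
  ∫ p : V → UI, ∏ e ∈ G.edgeFinset, W (p (Quot.out e).1) (p (Quot.out e).2)

/-- A graph is positive if `t(G,W) ≥ 0` for every kernel `W`. -/
def Positive {V : Type} [Fintype V] (G : SimpleGraph V) : Prop :=
  ∀ W : UI → UI → ℝ, IsKernel W → 0 ≤ homDensity G W

/-- A graph is symmetric if its vertex set can be partitioned into `(S, A, B)` with `S`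
independent, no edges between `A` and `B`, and an isomorphism between the induced subgraphs
on `S ∪ A` and `S ∪ B` fixing every vertex of `S`. -/
def IsSymmetricGraph {V : Type} [Fintype V] (G : SimpleGraph V) : Prop :=
  ∃ S A B : Set V,
    S ∪ A ∪ B = Set.univ ∧
    Disjoint S A ∧ Disjoint S B ∧ Disjoint A B ∧
    (∀ u ∈ S, ∀ v ∈ S, ¬ G.Adj u v) ∧
    (∀ a ∈ A, ∀ b ∈ B, ¬ G.Adj a b) ∧
    ∃ φ : (G.induce (S ∪ A)) ≃g (G.induce (S ∪ B)),
      ∀ (v : V) (hv : v ∈ S), ((φ ⟨v, Set.mem_union_left A hv⟩ : ↥(S ∪ B)) : V) = v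

/-!
Extend `φ` by `φ⁻¹` on `B` to an involutive automorphism `e` of `G` that fixes `S` and swaps `A`
and `B`. Every edge lies inside `S ∪ A` or inside `S ∪ B`, and not in both since `S` is
independent; `e` exchanges the two kinds. Hence the integrand of `t(G, W)` is `f(p) f(p ∘ e)`,
where `f(p)` is the product over the edges inside `S ∪ A` and depends only on `p` on `S ∪ A`.
Integrating out the coordinates on `A` and on `B` first gives `t(G, W) = ∫ (∫ f dp_A)² dp_S ≥ 0`.
-/

open Function

theorem Sym2.lift_map_eq_out {α β γ : Type*}
    (f : { f : β → β → γ // ∀ a₁ a₂, f a₁ a₂ = f a₂ a₁ }) (g : α → β) (s : Sym2 α) :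
    lift f (s.map g) = f.1 (g (Quot.out s).1) (g (Quot.out s).2) := by
  conv_lhs => rw [← Quot.out_eq s]
  rfl

theorem Finset.prod_eq_prod_filter_mul_prod_filter_comp {α M : Type*} [CommMonoid M]
    {s : Finset α} {ε : α → α} (hε : Involutive ε) (hs : ∀ x ∈ s, ε x ∈ s) {P : α → Prop}
    [DecidablePred P] (hP : ∀ x ∈ s, P (ε x) ↔ ¬ P x) (f : α → M) :
    ∏ x ∈ s, f x = (∏ x ∈ s with P x, f x) * ∏ x ∈ s with P x, f (ε x) := by
  rw [← prod_filter_mul_prod_filter_not s P f]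
  congr 1
  refine prod_nbij' ε ε (fun x hx => ?_) (fun x hx => ?_) (fun x _ => hε x) (fun x _ => hε x)
    (fun x _ => congrArg f (hε x).symm)
  · simp only [mem_filter] at hx ⊢
    exact ⟨hs x hx.1, (hP x hx.1).2 hx.2⟩
  · simp only [mem_filter] at hx ⊢
    exact ⟨hs x hx.1, fun h => (hP x hx.1).1 h hx.2⟩

theorem integral_prod_nonneg_of_integral_slice_nonneg {X Y : Type*} [MeasurableSpace X]
    [MeasurableSpace Y] {μ : Measure X} {ν : Measure Y} [SFinite μ] [SFinite ν] {F : X × Y → ℝ}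
    (hF : ∀ x, 0 ≤ ∫ y, F (x, y) ∂ν) : 0 ≤ ∫ z, F z ∂μ.prod ν := by
  by_cases hi : Integrable F (μ.prod ν)
  · rw [integral_prod F hi]
    exact integral_nonneg hF
  · rw [integral_undef hi]

def swapCopies (ι κ : Type*) : Equiv.Perm (ι ⊕ κ ⊕ κ) :=
  Equiv.sumCongr (Equiv.refl ι) (Equiv.sumComm κ κ)

def firstCopy (ι κ : Type*) : Set (ι ⊕ κ ⊕ κ) := Set.range (Sum.map id Sum.inl)

section Integral

variable {α : Type*} [MeasureSpace α] [SigmaFinite (volume : Measure α)]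
  {ι κ V : Type*} [Fintype ι] [Fintype κ] [Fintype V]

theorem integral_sumElim_mul (f : (ι → α) → ℝ) (g : (κ → α) → ℝ) :
    ∫ q : ι ⊕ κ → α, f (q ∘ Sum.inl) * g (q ∘ Sum.inr) = (∫ x, f x) * ∫ y, g y := by
  rw [← integral_prod_mul, ← Measure.volume_eq_prod,
    ← (volume_measurePreserving_sumPiEquivProdPi fun _ : ι ⊕ κ => α).integral_comp']
  rfl

theorem integral_nonneg_of_eq_mul_copies (σ : ι ⊕ κ ⊕ κ ≃ V) (F : (ι → α) → (κ → α) → ℝ)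
    {g : (V → α) → ℝ}
    (hg : ∀ q, g (q ∘ σ.symm) = F (q ∘ .inl) (q ∘ .inr ∘ .inl) * F (q ∘ .inl) (q ∘ .inr ∘ .inr)) :
    0 ≤ ∫ p, g p := by
  rw [← (volume_preserving_arrowCongr' σ (MeasurableEquiv.refl α) (.id volume)).integral_comp',
    ← (volume_measurePreserving_sumPiEquivProdPi fun _ : ι ⊕ κ ⊕ κ => α).symm.integral_comp',
    Measure.volume_eq_prod]
  refine integral_prod_nonneg_of_integral_slice_nonneg fun x => ?_
  change 0 ≤ ∫ y, g (Sum.elim x y ∘ σ.symm)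
  simp only [hg, Sum.elim_comp_inl, ← Function.comp_assoc, Sum.elim_comp_inr]
  rw [integral_sumElim_mul]
  exact mul_self_nonneg _

theorem integral_mul_comp_swapCopies_nonneg (σ : ι ⊕ κ ⊕ κ ≃ V) {f : (V → α) → ℝ}
    (hf : ∀ p q : V → α, (∀ x : ι ⊕ κ, p (σ (x.map id .inl)) = q (σ (x.map id .inl))) →
      f p = f q) :
    0 ≤ ∫ p, f p * f (p ∘ σ.permCongr (swapCopies ι κ)) :=
  integral_nonneg_of_eq_mul_copies σ (fun x y => f (Sum.elim x (Sum.elim y y) ∘ σ.symm))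
    fun q => by
      congr 1 <;> apply hf <;> rintro (i | k) <;> simp [swapCopies, Equiv.permCongr_apply]

end Integral

/-- `G` consists of two copies of a graph on `ι ⊕ κ` glued along the independent set `ι`; for a
symmetric graph, `σ` maps `ι` and the two copies of `κ` onto `S`, `A` and `B`. -/
structure SimpleGraph.IsDoubling {ι κ V : Type*} (G : SimpleGraph V) (σ : ι ⊕ κ ⊕ κ ≃ V) :
    Prop where
  adj_iff_adj_copy : ∀ x y : ι ⊕ κ, G.Adj (σ (x.map id .inl)) (σ (y.map id .inl)) ↔
    G.Adj (σ (x.map id .inr)) (σ (y.map id .inr))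
  not_adj_inl : ∀ i j, ¬ G.Adj (σ (.inl i)) (σ (.inl j))
  not_adj_copies : ∀ k l, ¬ G.Adj (σ (.inr (.inl k))) (σ (.inr (.inr l)))

namespace SimpleGraph.IsDoubling

variable {ι κ V : Type*} {G : SimpleGraph V} {σ : ι ⊕ κ ⊕ κ ≃ V}

theorem adj_swapCopies (hG : G.IsDoubling σ) {a b : ι ⊕ κ ⊕ κ} (h : G.Adj (σ a) (σ b)) :
    G.Adj (σ (swapCopies ι κ a)) (σ (swapCopies ι κ b)) := by
  have copy := hG.adj_iff_adj_copy
  have sep := hG.not_adj_copies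
  simp only [Sum.forall, Sum.map_inl, Sum.map_inr, id] at copy
  rcases a with i | k | k <;> rcases b with j | l | l <;> simp_all [swapCopies, G.adj_comm]

theorem swapCopies_mem_firstCopy_iff (hG : G.IsDoubling σ) {a b : ι ⊕ κ ⊕ κ}
    (h : G.Adj (σ a) (σ b)) :
    (swapCopies ι κ a ∈ firstCopy ι κ ∧ swapCopies ι κ b ∈ firstCopy ι κ) ↔
      ¬ (a ∈ firstCopy ι κ ∧ b ∈ firstCopy ι κ) := by
  have indep := hG.not_adj_inl
  have sep := hG.not_adj_copies
  rcases a with i | k | k <;> rcases b with j | l | l <;>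
    simp_all [swapCopies, firstCopy, G.adj_comm]

theorem integral_prod_edgeFinset_nonneg {α : Type*} [MeasureSpace α]
    [SigmaFinite (volume : Measure α)] [Fintype ι] [Fintype κ] [Fintype V] [Fintype G.edgeSet]
    (hG : G.IsDoubling σ) (w : Sym2 α → ℝ) :
    0 ≤ ∫ p : V → α, ∏ s ∈ G.edgeFinset, w (s.map p) := by
  classical
  set e := σ.permCongr (swapCopies ι κ)
  have he : Involutive e := fun v => by simp [e, swapCopies, Equiv.permCongr_apply]
  have he_map : Involutive (Sym2.map e) := fun s => by
    rw [Sym2.map_map, he.comp_self, Sym2.map_id, id]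
  let P : Sym2 V → Prop := fun s => ∀ v ∈ s, σ.symm v ∈ firstCopy ι κ
  have hmap : ∀ s ∈ G.edgeFinset, s.map e ∈ G.edgeFinset ∧ (P (s.map e) ↔ ¬ P s) := by
    intro s hs
    induction s using Sym2.ind with | _ u v => ?_
    obtain ⟨a, rfl⟩ := σ.surjective u
    obtain ⟨b, rfl⟩ := σ.surjective v
    rw [mem_edgeFinset, mem_edgeSet] at hs
    simp only [P, e, Sym2.map_mk, Sym2.ball, Equiv.permCongr_apply, Equiv.symm_apply_apply,
      mem_edgeFinset, mem_edgeSet]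
    exact ⟨hG.adj_swapCopies hs, hG.swapCopies_mem_firstCopy_iff hs⟩
  have hsplit : ∀ p : V → α, ∏ s ∈ G.edgeFinset, w (s.map p) =
      (∏ s ∈ G.edgeFinset with P s, w (s.map p)) *
        ∏ s ∈ G.edgeFinset with P s, w (s.map (p ∘ e)) := fun p => by
    rw [Finset.prod_eq_prod_filter_mul_prod_filter_comp he_map (fun s hs => (hmap s hs).1)
      (fun s hs => (hmap s hs).2)]
    simp only [Sym2.map_map]
  simp_rw [hsplit]
  refine integral_mul_comp_swapCopies_nonneg σ fun p q hpq =>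
    Finset.prod_congr rfl fun s hs => congrArg w (Sym2.map_congr fun v hv => ?_)
  obtain ⟨x, hx⟩ := (Finset.mem_filter.1 hs).2 v hv
  rw [← σ.apply_symm_apply v, ← hx]
  exact hpq x

end SimpleGraph.IsDoubling

namespace SimpleGraph

variable {V : Type*} {G : SimpleGraph V} {S A B : Set V}

theorem Iso.symm_apply_eq_of_apply_eq (φ : G.induce (S ∪ A) ≃g G.induce (S ∪ B))
    (hφ : ∀ v (hv : v ∈ S), (φ ⟨v, Or.inl hv⟩ : V) = v) (v : V) (hv : v ∈ S) :
    (φ.symm ⟨v, Or.inl hv⟩ : V) = v := by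
  rw [show (⟨v, Or.inl hv⟩ : ↥(S ∪ B)) = φ ⟨v, Or.inl hv⟩ from Subtype.ext (hφ v hv).symm,
    RelIso.symm_apply_apply]

theorem Iso.coe_apply_mem (φ : G.induce (S ∪ A) ≃g G.induce (S ∪ B))
    (hφ : ∀ v (hv : v ∈ S), (φ ⟨v, Or.inl hv⟩ : V) = v) (hSA : Disjoint S A) {a : V}
    (ha : a ∈ A) : (φ ⟨a, Or.inr ha⟩ : V) ∈ B := by
  rcases (φ ⟨a, Or.inr ha⟩).2 with hS | hB
  · have : φ ⟨_, Or.inl hS⟩ = φ ⟨a, Or.inr ha⟩ := Subtype.ext (hφ _ hS)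
    have hab : (φ ⟨a, Or.inr ha⟩ : V) = a := congrArg Subtype.val (φ.injective this)
    exact absurd (hab ▸ hS) (hSA.notMem_of_mem_right ha)
  · exact hB

theorem Iso.bijective_sumElim (φ : G.induce (S ∪ A) ≃g G.induce (S ∪ B))
    (hφ : ∀ v (hv : v ∈ S), (φ ⟨v, Or.inl hv⟩ : V) = v) (hcover : S ∪ A ∪ B = Set.univ)
    (hSA : Disjoint S A) (hSB : Disjoint S B) (hAB : Disjoint A B) :
    Bijective (Sum.elim ((↑) : S → V)
      (Sum.elim ((↑) : A → V) fun a : A => (φ ⟨a, Or.inr a.2⟩ : V))) := by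
  have hB : ∀ a : A, (φ ⟨a, Or.inr a.2⟩ : V) ∈ B := fun a => φ.coe_apply_mem hφ hSA a.2
  refine ⟨Subtype.val_injective.sumElim (Subtype.val_injective.sumElim ?_ ?_) ?_, fun v => ?_⟩
  · intro a a' h
    exact Subtype.ext (congrArg Subtype.val (φ.injective (Subtype.ext h)) :)
  · exact fun a a' h => hAB.ne_of_mem a.2 (hB a') h
  · rintro s (a | a) h
    exacts [hSA.ne_of_mem s.2 a.2 h, hSB.ne_of_mem s.2 (hB a) h]
  have hv : v ∈ S ∪ A ∪ B := hcover ▸ Set.mem_univ v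
  rcases hv with (hvS | hvA) | hvB
  · exact ⟨.inl ⟨v, hvS⟩, rfl⟩
  · exact ⟨.inr (.inl ⟨v, hvA⟩), rfl⟩
  · have ha := φ.symm.coe_apply_mem (Iso.symm_apply_eq_of_apply_eq φ hφ) hSB hvB
    exact ⟨.inr (.inr ⟨_, ha⟩), congrArg Subtype.val (φ.apply_symm_apply ⟨v, Or.inr hvB⟩)⟩

end SimpleGraph

theorem IsSymmetricGraph.exists_isDoubling {V : Type} [Fintype V] {G : SimpleGraph V}
    (h : IsSymmetricGraph G) : ∃ (S A : Set V) (σ : S ⊕ A ⊕ A ≃ V), G.IsDoubling σ := by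
  obtain ⟨S, A, B, hcover, hSA, hSB, hAB, hS, hsep, φ, hφ⟩ := h
  let σ := Equiv.ofBijective _ (φ.bijective_sumElim hφ hcover hSA hSB hAB)
  have copy : ∀ x : S ⊕ A, ∃ u : ↥(S ∪ A), σ (x.map id .inl) = u ∧ σ (x.map id .inr) = φ u := by
    rintro (s | a)
    · exact ⟨⟨s, Or.inl s.2⟩, rfl, (hφ s s.2).symm⟩
    · exact ⟨⟨a, Or.inr a.2⟩, rfl, rfl⟩
  refine ⟨S, A, σ, ⟨fun x y => ?_, fun i j => hS _ i.2 _ j.2,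
    fun k l => hsep _ k.2 _ (φ.coe_apply_mem hφ hSA l.2)⟩⟩
  obtain ⟨u, hu, hφu⟩ := copy x
  obtain ⟨u', hu', hφu'⟩ := copy y
  rw [hu, hu', hφu, hφu']
  exact φ.map_adj_iff.symm

theorem symmetric_implies_positive {V : Type} [Fintype V] (G : SimpleGraph V)
    (h : IsSymmetricGraph G) : Positive G := by
  classical
  obtain ⟨S, A, σ, hσ⟩ := h.exists_isDoubling
  rintro W ⟨-, hW, -⟩
  unfold homDensity
  simpa only [Sym2.lift_map_eq_out ⟨W, hW⟩] using
    hσ.integral_prod_edgeFinset_nonneg (Sym2.lift ⟨W, hW⟩)
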